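/- arXiv:1910.14130 — 3 statements merged into one kernel-verified Lean document; each statement's English description precedes it below -/
import Mathlib

section
/- Let Y, Z, U be binary, with f(Y=1|Z,U) = expit(β₀ + β_z Z + δU) and f(Z=1|U) = expit(α₀ + γU), where δ and γ are fixed known constants. If two parameter vectors (β₀⁽¹⁾, β_z⁽¹⁾, α₀⁽¹⁾) and (β₀⁽²⁾, β_z⁽²⁾, α₀⁽²⁾), together with the same distribution for U, induce the same observed-data likelihood L(Y=y, Z=z) for all (y,z) ∈ {0,1}², then β₀⁽¹⁾ = β₀⁽²⁾, β_z⁽¹⁾ = β_z⁽²⁾, and α₀⁽¹⁾ = α₀⁽²⁾. -/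
open Real

noncomputable def expit (x : ℝ) : ℝ := Real.exp x / (1 + Real.exp x)

/-- Bernoulli likelihood contribution: probability of observing `y ∈ {0,1}`
when the success probability is `q`. -/
noncomputable def bern (y : Fin 2) (q : ℝ) : ℝ := if y = 1 then q else 1 - q

/-
Summing the likelihood over `y` gives the law of `Z`, and `P(Z = 1) = ∑ᵤ expit (α₀ + γ u) ξ(u)`
is strictly increasing in `α₀`, so `α₀` is identified. With `α₀` known, `P(Y = 1, Z = z)` is
`∑ᵤ expit (β₀ + β_z z + δ u) w_z(u)` for the fixed nonnegative, not all zero, weights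
`w_z(u) = P(Z = z | U = u) ξ(u)`, again strictly increasing in `β₀ + β_z z`; taking `z = 0` and `z = 1` identifies `β₀` and `β_z`.
-/

lemma expit_eq_sigmoid (x : ℝ) : expit x = sigmoid x := by
  rw [expit, sigmoid_def, exp_neg]
  field_simp
  ring

lemma bern_pos (y : Fin 2) {q : ℝ} (hq₀ : 0 < q) (hq₁ : q < 1) : 0 < bern y q := by
  unfold bern
  split_ifs <;> linarith

lemma bern_one (q : ℝ) : bern 1 q = q := if_pos rfl

lemma sum_bern (q : ℝ) : ∑ y : Fin 2, bern y q = 1 := by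
  simp [Fin.sum_univ_two, bern]

lemma sum_sum_bern_mul {ι : Type*} [Fintype ι] (q r : ι → ℝ) :
    ∑ y : Fin 2, ∑ i, bern y (q i) * r i = ∑ i, r i := by
  rw [Finset.sum_comm]
  simp only [← Finset.sum_mul, sum_bern, one_mul]

lemma strictMono_sum_expit_mul {ι : Type*} [Fintype ι] (c w : ι → ℝ) (hw : ∀ i, 0 ≤ w i)
    (hpos : ∃ i, 0 < w i) : StrictMono fun a => ∑ i, expit (a + c i) * w i := by
  intro a b hab
  have hlt : ∀ i, expit (a + c i) < expit (b + c i) := fun i => by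
    simpa only [expit_eq_sigmoid] using sigmoid_strictMono (by linarith)
  obtain ⟨j, hj⟩ := hpos
  exact Finset.sum_lt_sum (fun i _ => mul_le_mul_of_nonneg_right (hlt i).le (hw i))
    ⟨j, Finset.mem_univ j, mul_lt_mul_of_pos_right (hlt j) hj⟩

/-- Identification: with binary `Y, Z, U`,
`P(Y=1|Z,U) = expit (β₀ + β_z Z + δ U)`, `P(Z=1|U) = expit (α₀ + γ U)`, `δ, γ`
fixed, and a fixed distribution `ξ` for `U`, two parameter vectors inducing the
same observed-data likelihood must coincide: `β₀, β_z, α₀` are identified. -/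
theorem identification_binary
    (δ γ : ℝ) (ξ : Fin 2 → ℝ) (hξ0 : ∀ u, 0 ≤ ξ u) (hξ1 : ∑ u : Fin 2, ξ u = 1)
    (β₀₁ βz₁ α₀₁ β₀₂ βz₂ α₀₂ : ℝ)
    (hlik : ∀ y z : Fin 2,
      (∑ u : Fin 2, bern y (expit (β₀₁ + βz₁ * (z : ℝ) + δ * (u : ℝ))) *
        bern z (expit (α₀₁ + γ * (u : ℝ))) * ξ u) =
      (∑ u : Fin 2, bern y (expit (β₀₂ + βz₂ * (z : ℝ) + δ * (u : ℝ))) *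
        bern z (expit (α₀₂ + γ * (u : ℝ))) * ξ u)) :
    β₀₁ = β₀₂ ∧ βz₁ = βz₂ ∧ α₀₁ = α₀₂ := by
  obtain ⟨u₀, hu₀⟩ : ∃ u, 0 < ξ u := by
    by_contra! h
    have : ∑ u : Fin 2, ξ u ≤ 0 := Finset.sum_nonpos fun u _ => h u
    linarith
  have hα : α₀₁ = α₀₂ := by
    have hZ := congrArg (fun f : Fin 2 → ℝ => ∑ y, f y) (funext fun y => hlik y 1)
    simp only [mul_assoc, sum_sum_bern_mul, bern_one] at hZ
    exact (strictMono_sum_expit_mul (fun u : Fin 2 => γ * u) ξ hξ0 ⟨u₀, hu₀⟩).injective hZ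
  subst hα
  have hβ (z : Fin 2) : β₀₁ + βz₁ * z = β₀₂ + βz₂ * z := by
    have hb (u : Fin 2) : 0 < bern z (expit (α₀₁ + γ * u)) :=
      bern_pos z (by simpa only [expit_eq_sigmoid] using sigmoid_pos _)
        (by simpa only [expit_eq_sigmoid] using sigmoid_lt_one _)
    refine (strictMono_sum_expit_mul (fun u : Fin 2 => δ * u) _
      (fun u => mul_nonneg (hb u).le (hξ0 u)) ⟨u₀, mul_pos (hb u₀) hu₀⟩).injective ?_
    simpa only [bern_one, mul_assoc] using hlik 1 z
  have h0 := hβ 0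
  have h1 := hβ 1
  simp only [Fin.val_zero, Fin.val_one, Nat.cast_zero, Nat.cast_one, mul_zero, add_zero,
    mul_one] at h0 h1
  exact ⟨h0, by linarith, rfl⟩
end

section
/- Let M(t) = ∫ exp(tu) dF(u) be the moment generating function of a probability measure F on ℝ, finite on an interval containing 0, δ, γ, and δ+γ. Given positive observed probabilities L(0,0), L(0,1), L(1,0), L(1,1) summing to 1 that are consistent with the log-linear model, the model parameters are explicitly recovered as: α₀ = log( L(0,1) / (L(0,0)·M(γ)) ), β₀ = log( L(1,0) / (L(0,0)·M(δ)) ), and β_z = log( (L(1,1)·M(δ)·M(γ)) / (L(0,1)·L(1,0)·M(δ+γ)) · L(0,0) ). -/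
/-!
Each cell of the table is `exp (linear form) * M (δ y + γ z) / C`. Dividing a cell by the
reference cell `(0, 0)` cancels `C` (and `M 0 = 1` for a probability measure), so the ratios
in the three formulas are exactly `exp α₀`, `exp β₀` and `exp βz`. The cells are positive, which
forces `C` and the values of `M` that occur to be nonzero.
-/

open Real MeasureTheory ProbabilityTheory

noncomputable section

def logLinearLikelihood (C β₀ α₀ βz δ γ : ℝ) (M : ℝ → ℝ) (y z : Fin 2) : ℝ :=
  (1 / C) * exp (β₀ * y + α₀ * z + βz * y * z) * M (δ * y + γ * z)

namespace logLinearLikelihood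

variable (C β₀ α₀ βz δ γ : ℝ) (M : ℝ → ℝ)

local notation "L" => logLinearLikelihood C β₀ α₀ βz δ γ M

theorem zero_zero : L 0 0 = M 0 / C := by
  simp only [logLinearLikelihood, Fin.val_zero, Nat.cast_zero, mul_zero, add_zero, exp_zero]
  ring

theorem zero_one : L 0 1 = exp α₀ * M γ / C := by
  simp only [logLinearLikelihood, Fin.val_zero, Fin.val_one, Nat.cast_zero, Nat.cast_one]
  ring_nf

theorem one_zero : L 1 0 = exp β₀ * M δ / C := by
  simp only [logLinearLikelihood, Fin.val_zero, Fin.val_one, Nat.cast_zero, Nat.cast_one]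
  ring_nf

theorem one_one : L 1 1 = exp (β₀ + α₀ + βz) * M (δ + γ) / C := by
  simp only [logLinearLikelihood, Fin.val_one, Nat.cast_one, mul_one]
  ring

variable {C β₀ α₀ βz δ γ M}

theorem ne_zero_and_ne_zero_of_ne_zero {y z : Fin 2} (h : L y z ≠ 0) :
    C ≠ 0 ∧ M (δ * y + γ * z) ≠ 0 := by
  obtain ⟨hCexp, hM⟩ := mul_ne_zero_iff.1 h
  exact ⟨by simpa using left_ne_zero_of_mul hCexp, hM⟩

variable (hM0 : M 0 = 1) (hC : C ≠ 0)
include hM0 hC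

theorem zero_one_div (hγ : M γ ≠ 0) : L 0 1 / (L 0 0 * M γ) = exp α₀ := by
  rw [zero_one, zero_zero, hM0]
  field_simp

theorem one_zero_div (hδ : M δ ≠ 0) : L 1 0 / (L 0 0 * M δ) = exp β₀ := by
  rw [one_zero, zero_zero, hM0]
  field_simp

theorem odds_ratio_div (hγ : M γ ≠ 0) (hδ : M δ ≠ 0) (hδγ : M (δ + γ) ≠ 0) :
    (L 1 1 * M δ * M γ) / (L 0 1 * L 1 0 * M (δ + γ)) * L 0 0 = exp βz := by
  rw [one_one, zero_one, one_zero, zero_zero, hM0, exp_add, exp_add]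
  field_simp

end logLinearLikelihood

end

theorem parameters_recovered_from_observed_likelihood_general
    (δ γ β₀ α₀ βz C : ℝ)
    (F : Measure ℝ) [IsProbabilityMeasure F]
    (M : ℝ → ℝ) (hM : ∀ t, M t = ∫ u, Real.exp (t * u) ∂F)
    (L : Fin 2 → Fin 2 → ℝ)
    (hLpos : ∀ y z : Fin 2, 0 < L y z)
    (hL : ∀ y z : Fin 2, L y z =
      (1 / C) * Real.exp (β₀ * y + α₀ * z + βz * y * z) * M (δ * y + γ * z)) :
    α₀ = Real.log (L 0 1 / (L 0 0 * M γ)) ∧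
    β₀ = Real.log (L 1 0 / (L 0 0 * M δ)) ∧
    βz = Real.log ((L 1 1 * M δ * M γ) / (L 0 1 * L 1 0 * M (δ + γ)) * L 0 0) := by
  obtain rfl : M = mgf id F := funext hM
  obtain rfl : L = logLinearLikelihood C β₀ α₀ βz δ γ (mgf id F) := funext₂ hL
  have hM0 : mgf id F 0 = 1 := mgf_zero
  have nonzero (y z : Fin 2) := logLinearLikelihood.ne_zero_and_ne_zero_of_ne_zero (hLpos y z).ne'
  have hC : C ≠ 0 := (nonzero 0 0).1
  have hγ : mgf id F γ ≠ 0 := by simpa using (nonzero 0 1).2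
  have hδ : mgf id F δ ≠ 0 := by simpa using (nonzero 1 0).2
  have hδγ : mgf id F (δ + γ) ≠ 0 := by simpa using (nonzero 1 1).2
  rw [logLinearLikelihood.zero_one_div hM0 hC hγ, logLinearLikelihood.one_zero_div hM0 hC hδ,
    logLinearLikelihood.odds_ratio_div hM0 hC hγ hδ hδγ]
  simp only [log_exp, and_self]

/-- Explicit recovery of the log-linear model parameters from the observed
likelihood values and the moment generating function `M` of the latent `U`
(conditional on `Y = 0, Z = 0`). -/
theorem parameters_recovered_from_observed_likelihood
    (δ γ β₀ α₀ βz C : ℝ) (hC : 0 < C)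
    (F : Measure ℝ) [IsProbabilityMeasure F]
    (hInt : ∀ t ∈ ({0, δ, γ, δ + γ} : Set ℝ),
      Integrable (fun u => Real.exp (t * u)) F)
    (M : ℝ → ℝ) (hM : ∀ t, M t = ∫ u, Real.exp (t * u) ∂F)
    (L : Fin 2 → Fin 2 → ℝ)
    (hLpos : ∀ y z : Fin 2, 0 < L y z)
    (hLsum : ∑ y : Fin 2, ∑ z : Fin 2, L y z = 1)
    (hL : ∀ y z : Fin 2, L y z =
      (1 / C) * Real.exp (β₀ * y + α₀ * z + βz * y * z) * M (δ * y + γ * z)) :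
    α₀ = Real.log (L 0 1 / (L 0 0 * M γ)) ∧
    β₀ = Real.log (L 1 0 / (L 0 0 * M δ)) ∧
    βz = Real.log ((L 1 1 * M δ * M γ) / (L 0 1 * L 1 0 * M (δ + γ)) * L 0 0) :=
  parameters_recovered_from_observed_likelihood_general δ γ β₀ α₀ βz C F M hM L hLpos hL
end

section
/- Let K: H → H be a compact injective linear operator on a Hilbert space H with dense range, and b = Ka for some a ∈ H. For α > 0 let a_α be the unique solution of (αI + K*K)a_α = K*b. Then a_α → a in H as α → 0⁺. -/
open Filter
local notation "⟬" x ", " y "⟭" => (inner ℝ x y : ℝ)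

/-- Tikhonov regularization consistency: if `K` is a compact injective bounded
linear operator on a Hilbert space `H` with dense range, `b = K a`, and for each
`α > 0` the regularized solution `aα α` solves `(αI + K*K) aα = K* b`, then
`aα α → a` as `α → 0⁺`. -/
theorem tikhonov_convergence
    {H : Type*} [NormedAddCommGroup H] [InnerProductSpace ℝ H] [CompleteSpace H]
    (K : H →L[ℝ] H) (hK : IsCompactOperator K)
    (hinj : Function.Injective K) (hrange : DenseRange K)
    (a b : H) (hb : b = K a)
    (aα : ℝ → H)
    (haα : ∀ α ∈ Set.Ioi (0 : ℝ),
      α • aα α + (ContinuousLinearMap.adjoint K) (K (aα α)) =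
        (ContinuousLinearMap.adjoint K) b) :
    Tendsto aα (nhdsWithin 0 (Set.Ioi (0 : ℝ))) (nhds a) := by
  set T : H →L[ℝ] H := (ContinuousLinearMap.adjoint K).comp K with hT
  -- key identity for the error
  have key : ∀ α : ℝ, 0 < α → α • (aα α - a) + T (aα α - a) = -(α • a) := by
    intro α hα
    have h := haα α hα
    rw [hb] at h
    have h' : α • aα α + T (aα α) = T a := h
    have h2 : T (aα α - a) = T (aα α) - T a := map_sub T _ _
    rw [h2, smul_sub]
    linear_combination (norm := module) h'
  -- T is "self-adjoint on pairs": ⟬T x, y⟫ = ⟬K x, K y⟫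
  have hTinner : ∀ x y : H, ⟬T x, y⟭ = ⟬K x, K y⟭ := by
    intro x y
    simp [hT, ContinuousLinearMap.adjoint_inner_left]
  have hTinner' : ∀ x y : H, ⟬x, T y⟭ = ⟬K x, K y⟭ := by
    intro x y
    simp [hT, ContinuousLinearMap.adjoint_inner_right]
  -- basic energy identity
  have energy : ∀ α : ℝ, 0 < α →
      α * ‖aα α - a‖ ^ 2 + ‖K (aα α - a)‖ ^ 2 = -(α * ⟬a, aα α - a⟭) := by
    intro α hα
    have h := congrArg (fun z => ⟬z, aα α - a⟭) (key α hα)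
    simp only [inner_add_left, real_inner_smul_left, inner_neg_left] at h
    rw [hTinner, real_inner_self_eq_norm_sq, real_inner_self_eq_norm_sq] at h
    linarith
  -- a priori bound ‖e‖ ≤ ‖a‖
  have ebound : ∀ α : ℝ, 0 < α → ‖aα α - a‖ ≤ ‖a‖ := by
    intro α hα
    have h := energy α hα
    have hcs : -⟬a, aα α - a⟭ ≤ ‖a‖ * ‖aα α - a‖ := by
      have := abs_real_inner_le_norm a (aα α - a)
      have := neg_abs_le (⟬a, aα α - a⟭)
      linarith [abs_real_inner_le_norm a (aα α - a),
        neg_abs_le (⟬a, aα α - a⟭)]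
    have hKe : (0:ℝ) ≤ ‖K (aα α - a)‖ ^ 2 := by positivity
    have h1 : α * ‖aα α - a‖ ^ 2 ≤ α * (‖a‖ * ‖aα α - a‖) := by nlinarith
    have h2 : ‖aα α - a‖ ^ 2 ≤ ‖a‖ * ‖aα α - a‖ :=
      le_of_mul_le_mul_left (by linarith) hα
    nlinarith [norm_nonneg (aα α - a), norm_nonneg a]
  -- the main estimate, for any y approximating a by T y
  have main : ∀ y : H, ∀ α : ℝ, 0 < α →
      ‖aα α - a‖ ^ 2 ≤ 2 * α * ‖y‖ * ‖a‖ + ‖a - T y‖ * ‖a‖ := by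
    intro y α hα
    set e := aα α - a with he
    have hen := energy α hα
    have hTe : T e = -(α • a) - α • e := by
      have := key α hα
      linear_combination (norm := module) this
    -- ⟬a, e⟫ = ⟬T y, e⟫ + ⟬a - T y, e⟫
    have hsplit : ⟬a, e⟭ = ⟬T y, e⟭ + ⟬a - T y, e⟭ := by
      rw [← inner_add_left]
      congr 1
      abel
    have hTy : ⟬T y, e⟭ = -(α * ⟬y, a⟭) - α * ⟬y, e⟭ := by
      rw [hTinner, ← hTinner', hTe]
      simp [inner_sub_right, inner_neg_right, real_inner_smul_right]
    have hbig : α * ‖e‖ ^ 2 + ‖K e‖ ^ 2 =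
        α * α * ⟬y, a⟭ + α * α * ⟬y, e⟭ - α * ⟬a - T y, e⟭ := by
      rw [hen, hsplit, hTy]; ring
    have hKe : (0:ℝ) ≤ ‖K e‖ ^ 2 := by positivity
    have hce : ‖e‖ ≤ ‖a‖ := ebound α hα
    have c1 : ⟬y, a⟭ ≤ ‖y‖ * ‖a‖ := real_inner_le_norm y a
    have c2 : ⟬y, e⟭ ≤ ‖y‖ * ‖e‖ := real_inner_le_norm y e
    have c3 : -⟬a - T y, e⟭ ≤ ‖a - T y‖ * ‖e‖ := by
      have h1 := abs_real_inner_le_norm (a - T y) e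
      have h2 := neg_abs_le (⟬a - T y, e⟭)
      linarith
    have hy0 : (0:ℝ) ≤ ‖y‖ := norm_nonneg y
    have he0 : (0:ℝ) ≤ ‖e‖ := norm_nonneg e
    have hr0 : (0:ℝ) ≤ ‖a - T y‖ := norm_nonneg _
    have ha0 : (0:ℝ) ≤ ‖a‖ := norm_nonneg a
    have step : α * ‖e‖ ^ 2 ≤ α * α * ‖y‖ * ‖a‖ + α * α * ‖y‖ * ‖a‖
        + α * (‖a - T y‖ * ‖a‖) := by
      nlinarith [mul_le_mul_of_nonneg_left c2 (mul_pos hα hα).le,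
        mul_le_mul_of_nonneg_left c1 (mul_pos hα hα).le,
        mul_le_mul_of_nonneg_left c3 hα.le,
        mul_le_mul_of_nonneg_left hce (mul_nonneg (mul_pos hα hα).le hy0),
        mul_le_mul_of_nonneg_left hce (mul_nonneg hα.le hr0)]
    have := le_of_mul_le_mul_left (by linarith : α * ‖e‖ ^ 2 ≤
      α * (2 * α * ‖y‖ * ‖a‖ + ‖a - T y‖ * ‖a‖)) hα
    linarith
  -- density of the range of T
  have hdense : ∀ ε : ℝ, 0 < ε → ∃ y : H, ‖a - T y‖ < ε := by
    intro ε hε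
    have horth : (LinearMap.range (T : H →ₗ[ℝ] H))ᗮ = ⊥ := by
      rw [Submodule.eq_bot_iff]
      intro v hv
      have h0 : ⟬T v, v⟭ = 0 := hv (T v) ⟨v, rfl⟩
      rw [hTinner, real_inner_self_eq_norm_sq] at h0
      have : K v = 0 := by
        have : ‖K v‖ = 0 := by nlinarith [norm_nonneg (K v)]
        simpa using this
      have : K v = K 0 := by simpa using this
      exact hinj this
    have hclos : (LinearMap.range (T : H →ₗ[ℝ] H)).topologicalClosure = ⊤ := by
      rw [Submodule.topologicalClosure_eq_top_iff, horth]
    have hmem : a ∈ closure ((LinearMap.range (T : H →ₗ[ℝ] H)) : Set H) := by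
      have : a ∈ (LinearMap.range (T : H →ₗ[ℝ] H)).topologicalClosure := by
        rw [hclos]; trivial
      exact this
    rw [Metric.mem_closure_iff] at hmem
    obtain ⟨u, hu, hdu⟩ := hmem ε hε
    obtain ⟨y, rfl⟩ := hu
    exact ⟨y, by simpa [dist_eq_norm] using hdu⟩
  -- conclude
  rw [Metric.tendsto_nhdsWithin_nhds]
  intro ε hε
  obtain ⟨y, hy⟩ := hdense (ε ^ 2 / (2 * (‖a‖ + 1))) (by positivity)
  refine ⟨ε ^ 2 / (4 * (‖y‖ * ‖a‖ + 1)), by positivity, ?_⟩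
  intro α hα hd
  rw [Set.mem_Ioi] at hα
  rw [Real.dist_eq, sub_zero, abs_of_pos hα] at hd
  have hm := main y α hα
  have hy0 : (0:ℝ) ≤ ‖y‖ := norm_nonneg y
  have ha0 : (0:ℝ) ≤ ‖a‖ := norm_nonneg a
  have hr0 : (0:ℝ) ≤ ‖a - T y‖ := norm_nonneg _
  have h1 : 2 * α * ‖y‖ * ‖a‖ < ε ^ 2 / 2 := by
    have : α * (‖y‖ * ‖a‖) ≤ α * (‖y‖ * ‖a‖ + 1) := by nlinarith
    have h2 : α * (‖y‖ * ‖a‖ + 1) < ε ^ 2 / 4 := by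
      rw [lt_div_iff₀ (by positivity)] at hd
      nlinarith
    nlinarith
  have h2 : ‖a - T y‖ * ‖a‖ < ε ^ 2 / 2 := by
    have := hy
    rw [lt_div_iff₀ (by positivity)] at this
    nlinarith
  have hlt : ‖aα α - a‖ ^ 2 < ε ^ 2 := by linarith
  rw [dist_eq_norm]
  nlinarith [norm_nonneg (aα α - a)]
end
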